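/- arXiv:1511.08447 — 7 statements merged into one kernel-verified Lean document; each statement's English description precedes it below -/
import Mathlib

section
/- Suppose σ = σ₁ ++ σ₂ ++ … ++ σ_k is a legal and quiescent run such that each σ_i (1 ≤ i ≤ k) is a quiescent run. Then every σ_i (1 ≤ i ≤ k) is legal. -/
variable {Op Proc : Type*}

abbrev Ev (Op Proc : Type*) := Op × Proc × Bool

def IsInv (e : Ev Op Proc) : Prop := e.2.2 = true

def EvMatches (e e' : Ev Op Proc) : Prop :=
  e.1 = e'.1 ∧ e.2.1 = e'.2.1 ∧ e.2.2 = true ∧ e'.2.2 = false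

def proj [DecidableEq Proc] (p : Proc) (σ : List (Ev Op Proc)) : List (Ev Op Proc) :=
  σ.filter (fun e => e.2.1 = p)

def SequentialRun (σ : List (Ev Op Proc)) : Prop :=
  σ = [] ∨
    ((∃ h : 0 < σ.length, IsInv (σ[0]'h)) ∧
     (∀ i, i % 2 = 0 → ∀ h : i + 1 < σ.length,
        EvMatches (σ[i]'(Nat.lt_of_succ_lt h)) (σ[i+1]'h)) ∧
     ((σ.length - 1) % 2 = 0 →
        ∃ h : σ.length - 1 < σ.length, IsInv (σ[σ.length - 1]'h)))

def Legal [DecidableEq Proc] (σ : List (Ev Op Proc)) : Prop :=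
  ∀ p : Proc, SequentialRun (proj p σ)

def Quiescent (σ : List (Ev Op Proc)) : Prop :=
  ∀ σ₁ (e : Ev Op Proc) σ₂, σ = σ₁ ++ e :: σ₂ → IsInv e → ∃ e' ∈ σ₂, EvMatches e e'

def ETEQ (σ : List (Ev Op Proc)) : Prop :=
  Quiescent σ ∧ ∀ u, u <+: σ → u ≠ [] → u ≠ σ → ¬ Quiescent u

/-!
A sequential run stays sequential when cut after any prefix, or before a prefix of even length.
If σ₁ is quiescent, the last event of each projection of σ₁ is a response (a final invocation
would be pending), so these projections have even length. Hence a legal run σ₁ ++ τ with σ₁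
quiescent splits into the legal runs σ₁ and τ, and induction on the list of pieces finishes.
-/

theorem SequentialRun.isInv_getElem {σ : List (Ev Op Proc)} (hσ : SequentialRun σ) {i : ℕ}
    (hi : i % 2 = 0) (h : i < σ.length) : IsInv σ[i] := by
  rcases hσ with rfl | ⟨-, hmatch, hlast⟩
  · simp at h
  by_cases hnext : i + 1 < σ.length
  · exact (hmatch i hi hnext).2.2.1
  · obtain rfl : i = σ.length - 1 := by omega
    exact (hlast hi).2

theorem SequentialRun.take {σ : List (Ev Op Proc)} (hσ : SequentialRun σ) (n : ℕ) :
    SequentialRun (σ.take n) := by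
  rcases id hσ with h | ⟨-, hmatch, -⟩
  · exact Or.inl (by simp [h])
  refine (eq_or_ne (σ.take n) []).imp id fun hne => ?_
  have hpos := List.length_pos_iff.mpr hne
  have hle : (σ.take n).length ≤ σ.length := List.length_take_le' _ _
  refine ⟨⟨hpos, ?_⟩, fun i hi h => ?_, fun hi => ⟨by omega, ?_⟩⟩
  · simpa using hσ.isInv_getElem (i := 0) rfl (by omega)
  · simpa using hmatch i hi (by omega)
  · simpa using hσ.isInv_getElem hi (by omega)

theorem SequentialRun.drop {σ : List (Ev Op Proc)} (hσ : SequentialRun σ) {n : ℕ}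
    (hn : n % 2 = 0) : SequentialRun (σ.drop n) := by
  rcases id hσ with h | ⟨-, hmatch, -⟩
  · exact Or.inl (by simp [h])
  refine (eq_or_ne (σ.drop n) []).imp id fun hne => ?_
  have hpos := List.length_pos_iff.mpr hne
  have hlen : (σ.drop n).length = σ.length - n := List.length_drop
  refine ⟨⟨hpos, ?_⟩, fun i hi h => ?_, fun hi => ⟨by omega, ?_⟩⟩
  · simpa using hσ.isInv_getElem hn (by omega)
  · simpa [Nat.add_assoc] using hmatch (n + i) (by omega) (by omega)
  · simpa using hσ.isInv_getElem (i := n + ((σ.drop n).length - 1)) (by omega) (by omega)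

section Projection

variable [DecidableEq Proc]

theorem proj_append (p : Proc) (σ τ : List (Ev Op Proc)) :
    proj p (σ ++ τ) = proj p σ ++ proj p τ :=
  List.filter_append ..

theorem Quiescent.not_isInv_of_proj_eq_append_singleton {σ : List (Ev Op Proc)}
    (hσ : Quiescent σ) {p : Proc} {l : List (Ev Op Proc)} {e : Ev Op Proc}
    (hproj : proj p σ = l ++ [e]) : ¬ IsInv e := by
  intro hinv
  obtain ⟨σ₁, σ₂, rfl, -, hlast⟩ := List.filter_eq_append_iff.mp hproj
  obtain ⟨σ₂₁, σ₂₂, rfl, -, hp, hrest⟩ := List.filter_eq_cons_iff.mp hlast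
  obtain ⟨e', he', hmatch⟩ := hσ (σ₁ ++ σ₂₁) e σ₂₂ (by simp) hinv
  have : e' ∈ σ₂₂.filter (fun e => e.2.1 = p) := by
    simp only [List.mem_filter, decide_eq_true_eq] at hp ⊢
    exact ⟨he', hmatch.2.1 ▸ hp⟩
  simp [hrest] at this

theorem Quiescent.length_proj_mod_two {σ : List (Ev Op Proc)} (hσ : Quiescent σ) {p : Proc}
    (hseq : SequentialRun (proj p σ)) : (proj p σ).length % 2 = 0 := by
  by_contra hodd
  have hne : proj p σ ≠ [] := by rintro h; simp [h] at hodd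
  refine hσ.not_isInv_of_proj_eq_append_singleton (List.dropLast_append_getLast hne).symm ?_
  simpa [List.getLast_eq_getElem] using hseq.isInv_getElem (by omega) (by omega)

theorem Legal.of_append_left {σ τ : List (Ev Op Proc)} (h : Legal (σ ++ τ)) : Legal σ := by
  intro p
  simpa [proj_append] using (h p).take (proj p σ).length

theorem Legal.of_append_right {σ τ : List (Ev Op Proc)} (hσ : Quiescent σ)
    (h : Legal (σ ++ τ)) : Legal τ := by
  intro p
  simpa [proj_append] using (h p).drop (hσ.length_proj_mod_two (h.of_append_left p))

end Projection

theorem legal_of_quiescent_pieces_general [DecidableEq Proc]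
    (L : List (List (Ev Op Proc)))
    (hlegal : Legal L.flatten)
    (hpieces : ∀ σi ∈ L, Quiescent σi) :
    ∀ σi ∈ L, Legal σi := by
  induction L with
  | nil => simp
  | cons σ L ih =>
    rw [List.flatten_cons] at hlegal
    have hσ : Quiescent σ := hpieces σ List.mem_cons_self
    rintro σi (_ | ⟨_, hmem⟩)
    · exact hlegal.of_append_left
    · exact ih (hlegal.of_append_right hσ)
        (fun τ hτ => hpieces τ (List.mem_cons_of_mem _ hτ)) σi hmem

/-- If σ = σ₁ ++ … ++ σ_k is a legal and quiescent run and each σᵢ is quiescent,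
then every σᵢ is legal. -/
theorem legal_of_quiescent_pieces [DecidableEq Proc]
    (L : List (List (Ev Op Proc)))
    (hlegal : Legal L.flatten) (hquies : Quiescent L.flatten)
    (hpieces : ∀ σi ∈ L, Quiescent σi) :
    ∀ σi ∈ L, Legal σi :=
  legal_of_quiescent_pieces_general L hlegal hpieces
end

section
/- If σ is a legal quiescent run, σ' is a permutation of σ (List.Perm), and σ' is legal, then σ' is quiescent. -/
variable {Op Proc : Type*}

/-! In a legal run the events of each process alternate invocation, matching response,
invocation, …, so a process has a pending invocation exactly when its projection has odd
length: its last event is then an invocation with no later event of that process.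
Quiescence of a legal run therefore depends only on the lengths of the projections, and
these are invariant under permutation. -/

namespace SequentialRun

variable {τ : List (Ev Op Proc)}

theorem not_isInv_getElem_of_odd (hτ : SequentialRun τ) {i : ℕ} (hi : Odd i)
    (h : i < τ.length) : ¬ IsInv τ[i] := by
  rcases hτ with rfl | ⟨-, hmatch, -⟩
  · simp at h
  obtain ⟨k, rfl⟩ := hi
  have hresp := (hmatch (2 * k) (by omega) h).2.2.2
  simp [IsInv, hresp]

theorem isInv_getLast (hτ : SequentialRun τ) (hodd : Odd τ.length) :
    IsInv (τ.getLast (List.ne_nil_of_length_pos hodd.pos)) := by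
  rcases hτ with rfl | ⟨-, -, hlast⟩
  · simp at hodd
  obtain ⟨_, hinv⟩ := hlast (by obtain ⟨k, hk⟩ := hodd; omega)
  rwa [List.getLast_eq_getElem]

theorem exists_evMatches_of_even_length {a b : List (Ev Op Proc)} {e : Ev Op Proc}
    (hτ : SequentialRun (a ++ e :: b)) (he : IsInv e) (heven : Even (a ++ e :: b).length) :
    ∃ e' ∈ b, EvMatches e e' := by
  have ha : Even a.length := by
    by_contra hodd
    exact hτ.not_isInv_getElem_of_odd (Nat.not_even_iff_odd.1 hodd) (by simp) (by simpa)
  cases b with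
  | nil => simp [Nat.even_add_one, ha] at heven
  | cons e' b =>
    rcases hτ with h | ⟨-, hmatch, -⟩
    · simp at h
    refine ⟨e', List.mem_cons_self, ?_⟩
    simpa using hmatch a.length (Nat.even_iff.1 ha) (by simp)

end SequentialRun

section Projection

variable [DecidableEq Proc] {p : Proc} {σ : List (Ev Op Proc)}

theorem mem_proj {e : Ev Op Proc} : e ∈ proj p σ ↔ e ∈ σ ∧ e.2.1 = p := by
  simp [proj]

theorem proj_append_cons_self (σ₁ σ₂ : List (Ev Op Proc)) (e : Ev Op Proc) :
    proj e.2.1 (σ₁ ++ e :: σ₂) = proj e.2.1 σ₁ ++ e :: proj e.2.1 σ₂ := by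
  simp [proj, List.filter_append]

theorem exists_eq_append_cons_proj_eq_nil {L : List (Ev Op Proc)} {e : Ev Op Proc}
    (h : proj p σ = L ++ [e]) : ∃ σ₁ σ₂, σ = σ₁ ++ e :: σ₂ ∧ proj p σ₂ = [] := by
  obtain ⟨l₁, l₂, rfl, -, h₂⟩ := List.filter_eq_append_iff.1 h
  obtain ⟨m₁, m₂, rfl, -, -, hm₂⟩ := List.filter_eq_cons_iff.1 h₂
  exact ⟨l₁ ++ m₁, m₂, by simp, hm₂⟩

theorem List.Perm.length_proj {σ' : List (Ev Op Proc)} (hperm : σ.Perm σ') (p : Proc) :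
    (proj p σ).length = (proj p σ').length :=
  (hperm.filter _).length_eq

end Projection

namespace Legal

variable [DecidableEq Proc] {σ : List (Ev Op Proc)}

theorem even_length_proj_of_quiescent (hσ : Legal σ) (hq : Quiescent σ) (p : Proc) :
    Even (proj p σ).length := by
  by_contra hodd
  have hodd := Nat.not_even_iff_odd.1 hodd
  have hne := List.ne_nil_of_length_pos hodd.pos
  obtain ⟨σ₁, σ₂, hsplit, hnil⟩ :=
    exists_eq_append_cons_proj_eq_nil (List.dropLast_append_getLast hne).symm
  obtain ⟨e', he'σ₂, hmatch⟩ := hq σ₁ _ σ₂ hsplit ((hσ p).isInv_getLast hodd)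
  have hlast_proc := (mem_proj.1 (List.getLast_mem hne)).2
  have he'_proj : e' ∈ proj p σ₂ := mem_proj.2 ⟨he'σ₂, hmatch.2.1 ▸ hlast_proc⟩
  simp [hnil] at he'_proj

theorem quiescent_of_even_length_proj (hσ : Legal σ) (heven : ∀ p, Even (proj p σ).length) :
    Quiescent σ := by
  rintro σ₁ e σ₂ rfl he
  have hsplit := proj_append_cons_self σ₁ σ₂ e
  obtain ⟨e', he'_proj, hmatch⟩ :=
    (hsplit ▸ hσ e.2.1).exists_evMatches_of_even_length he (hsplit ▸ heven e.2.1)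
  exact ⟨e', (mem_proj.1 he'_proj).1, hmatch⟩

theorem quiescent_iff_even_length_proj (hσ : Legal σ) :
    Quiescent σ ↔ ∀ p, Even (proj p σ).length :=
  ⟨hσ.even_length_proj_of_quiescent, hσ.quiescent_of_even_length_proj⟩

end Legal

/-- Any legal permutation of a legal quiescent run is quiescent. -/
theorem quiescent_of_legal_perm [DecidableEq Proc]
    (σ σ' : List (Ev Op Proc)) (hlegal : Legal σ) (hquies : Quiescent σ)
    (hperm : σ.Perm σ') (hlegal' : Legal σ') :
    Quiescent σ' := by
  rw [hlegal'.quiescent_iff_even_length_proj]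
  intro p
  rw [← hperm.length_proj p]
  exact hlegal.even_length_proj_of_quiescent hquies p
end

section
/- Let M be an NFA over the event alphabet Σ and let q₀ be a designated initial state. Assume: (i) every word w over Σ with M.evalFrom {q₀} w nonempty is legal; and (ii) for every word w and every state q ∈ M.evalFrom {q₀} w there exists a word w' such that M.evalFrom {q} w' is nonempty and w ++ w' is quiescent. Then for every state q: if some quiescent word w satisfies q ∈ M.evalFrom {q₀} w, then every word u with q ∈ M.evalFrom {q₀} u is quiescent. -/
variable {Op Proc : Type*}

/-!
In a sequential run the invocations sit exactly at the even positions, so a legal run is quiescent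
iff each of its projections has even length. If `u` (with a pending invocation by `p`) and a
quiescent `w` both reach `q`, take the completion `w'` from `q` that makes `u ++ w'` quiescent:
then `π_p(w')` is nonempty, and its first event is a response in `u ++ w'` (where `π_p(u)` has odd
length) but an invocation in `w ++ w'` (where `π_p(w)` has even length), and both runs are legal.
-/

theorem SequentialRun.isInv_getElem_iff {s : List (Ev Op Proc)} (hs : SequentialRun s) {i : ℕ}
    (hi : i < s.length) : IsInv s[i] ↔ Even i := by
  rcases hs with rfl | ⟨-, hmatch, hlast⟩
  · simp at hi
  rcases Nat.even_or_odd i with heven | ⟨j, rfl⟩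
  · refine iff_of_true ?_ heven
    by_cases hnext : i + 1 < s.length
    · exact (hmatch i (Nat.even_iff.1 heven) hnext).2.2.1
    · obtain rfl : i = s.length - 1 := by omega
      exact (hlast (Nat.even_iff.1 heven)).2
  · refine iff_of_false ?_ (Nat.not_even_iff_odd.2 ⟨j, rfl⟩)
    simp [IsInv, (hmatch (2 * j) (by omega) hi).2.2.2]

theorem SequentialRun.quiescent_iff_even_length {s : List (Ev Op Proc)} (hs : SequentialRun s) :
    Quiescent s ↔ Even s.length := by
  constructor
  · intro hq
    by_contra hodd
    have hne : s ≠ [] := by rintro rfl; exact hodd ⟨0, rfl⟩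
    have hlast : IsInv (s.getLast hne) := by
      obtain ⟨k, hk⟩ := Nat.not_even_iff_odd.1 hodd
      rw [List.getLast_eq_getElem, hs.isInv_getElem_iff]
      exact ⟨k, by omega⟩
    obtain ⟨e', he', -⟩ := hq s.dropLast _ [] (List.dropLast_append_getLast hne).symm hlast
    exact List.not_mem_nil he'
  · rintro heven t₁ e t₂ rfl he
    have hk_even : Even t₁.length :=
      (hs.isInv_getElem_iff (i := t₁.length) (by simp)).1 (by simpa using he)
    obtain ⟨f, t₃, rfl⟩ : ∃ f t₃, t₂ = f :: t₃ := by
      refine List.exists_cons_of_ne_nil fun h => ?_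
      subst h
      simp [Nat.even_add_one, hk_even] at heven
    rcases hs with h | ⟨-, hmatch, -⟩
    · simp at h
    · refine ⟨f, List.mem_cons_self .., ?_⟩
      simpa using hmatch t₁.length (Nat.even_iff.1 hk_even) (by simp)

theorem SequentialRun.even_length_iff_of_append {a b c : List (Ev Op Proc)}
    (hac : SequentialRun (a ++ c)) (hbc : SequentialRun (b ++ c)) (hc : c ≠ []) :
    Even a.length ↔ Even b.length := by
  obtain ⟨x, c, rfl⟩ := List.exists_cons_of_ne_nil hc
  rw [← hac.isInv_getElem_iff (i := a.length) (by simp),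
    ← hbc.isInv_getElem_iff (i := b.length) (by simp)]
  simp

section

variable [DecidableEq Proc]

theorem Quiescent.proj {σ : List (Ev Op Proc)} (h : Quiescent σ) (p : Proc) :
    Quiescent (proj p σ) := by
  intro t₁ e t₂ ht he
  obtain ⟨l₁, l₂, rfl, -, hl₂⟩ := List.filter_eq_append_iff.1 ht
  obtain ⟨a, b, rfl, -, hep, rfl⟩ := List.filter_eq_cons_iff.1 hl₂
  obtain ⟨e', he'b, hm⟩ := h (l₁ ++ a) e b (by simp) he
  refine ⟨e', List.mem_filter.2 ⟨he'b, ?_⟩, hm⟩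
  simpa [← hm.2.1] using hep

theorem quiescent_iff_forall_quiescent_proj {σ : List (Ev Op Proc)} :
    Quiescent σ ↔ ∀ p, Quiescent (proj p σ) := by
  refine ⟨Quiescent.proj, fun h σ₁ e σ₂ hσ he => ?_⟩
  obtain ⟨e', he', hm⟩ :=
    h e.2.1 (proj e.2.1 σ₁) e (proj e.2.1 σ₂) (by simp [hσ, proj]) he
  exact ⟨e', List.mem_of_mem_filter he', hm⟩

theorem Legal.quiescent_iff {σ : List (Ev Op Proc)} (h : Legal σ) :
    Quiescent σ ↔ ∀ p, Even (proj p σ).length := by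
  rw [quiescent_iff_forall_quiescent_proj]
  exact forall_congr' fun p => (h p).quiescent_iff_even_length

end

/-- If every word reachable from q₀ is legal, and every reachable configuration can be
extended to a quiescent word, then any state reached by some quiescent word is reached
only by quiescent words. -/
theorem quiescent_states_well_defined [DecidableEq Proc] {S : Type*}
    (M : NFA (Ev Op Proc) S) (q₀ : S)
    (hlegal : ∀ w : List (Ev Op Proc), (M.evalFrom {q₀} w).Nonempty → Legal w)
    (hcomplete : ∀ (w : List (Ev Op Proc)) (q : S), q ∈ M.evalFrom {q₀} w →
      ∃ w' : List (Ev Op Proc), (M.evalFrom {q} w').Nonempty ∧ Quiescent (w ++ w')) :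
    ∀ q : S, (∃ w : List (Ev Op Proc), Quiescent w ∧ q ∈ M.evalFrom {q₀} w) →
      ∀ u : List (Ev Op Proc), q ∈ M.evalFrom {q₀} u → Quiescent u := by
  rintro q ⟨w, hw, hwq⟩ u huq
  by_contra hu
  obtain ⟨w', ⟨q', hq'⟩, huw'⟩ := hcomplete u q huq
  have hreach : ∀ v, q ∈ M.evalFrom {q₀} v → Legal v ∧ Legal (v ++ w') := fun v hv =>
    ⟨hlegal v ⟨q, hv⟩, hlegal _ ⟨q', by
      rw [NFA.evalFrom_append, NFA.mem_evalFrom_iff_exists]; exact ⟨q, hv, hq'⟩⟩⟩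
  obtain ⟨hu_legal, huw'_legal⟩ := hreach u huq
  obtain ⟨hw_legal, hww'_legal⟩ := hreach w hwq
  obtain ⟨p, hp⟩ : ∃ p, ¬Even (proj p u).length := by
    simpa [hu_legal.quiescent_iff] using hu
  have hw'p : proj p w' ≠ [] := by
    intro h
    have heven := (huw'_legal.quiescent_iff.1 huw') p
    rw [proj_append, h, List.append_nil] at heven
    exact hp heven
  have hseq : ∀ v, Legal (v ++ w') → SequentialRun (proj p v ++ proj p w') := fun v hv =>
    proj_append p v w' ▸ hv p
  exact hp <| ((hseq u huw'_legal).even_length_iff_of_append (hseq w hww'_legal) hw'p).2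
    ((hw_legal.quiescent_iff.1 hw) p)
end

section
/- For all runs σ and σ' over the event alphabet Σ: σ ~_R σ' if and only if π_p(σ) = π_p(σ') for every process p. (Projection characterisation of the trace equivalence generated by the independence relation R that relates exactly the pairs of events with distinct processes.) -/
/-! Every swap of independent events preserves each projection, which gives one direction.
Conversely, if σ and `a :: τ` have the same projections, then the first event of σ on the
process of `a` is `a` itself and every earlier event of σ is independent of it, so `a` can be
swapped to the front of σ; the rest follows by induction on the target run. -/

variable {Op Proc : Type*}

/-- One swap of two adjacent letters related by the independence relation I. -/
inductive SwapStep {A : Type*} (I : A → A → Prop) : List A → List A → Prop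
  | swap (u v : List A) (a b : A) : I a b → SwapStep I (u ++ a :: b :: v) (u ++ b :: a :: v)

/-- The independence relation R: two events are independent iff their processes differ. -/
def IndepR (a b : Ev Op Proc) : Prop := a.2.1 ≠ b.2.1

namespace SwapStep

variable {A : Type*} {I : A → A → Prop}

theorem cons {l l' : List A} (x : A) (h : SwapStep I l l') : SwapStep I (x :: l) (x :: l') := by
  obtain ⟨u, v, a, b, hab⟩ := h
  exact swap (x :: u) v a b hab

theorem reflTransGen_cons {l l' : List A} (x : A)
    (h : Relation.ReflTransGen (SwapStep I) l l') :
    Relation.ReflTransGen (SwapStep I) (x :: l) (x :: l') :=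
  Relation.ReflTransGen.lift (List.cons x) (fun _ _ => cons x) l l' h

theorem reflTransGen_append_cons (a : A) (v : List A) :
    ∀ u : List A, (∀ e ∈ u, I e a) →
      Relation.ReflTransGen (SwapStep I) (u ++ a :: v) (a :: (u ++ v))
  | [], _ => .refl
  | b :: u, hu => by
    have moveBehindB :
        Relation.ReflTransGen (SwapStep I) (b :: (u ++ a :: v)) (b :: a :: (u ++ v)) :=
      reflTransGen_cons b (reflTransGen_append_cons a v u fun e he => hu e (.tail b he))
    exact moveBehindB.tail (swap [] (u ++ v) b a (hu b List.mem_cons_self))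

end SwapStep

section Projection

variable [DecidableEq Proc]

theorem proj_eq_of_swapStep {σ τ : List (Ev Op Proc)} (h : SwapStep IndepR σ τ) (p : Proc) :
    proj p σ = proj p τ := by
  obtain ⟨u, v, a, b, hab⟩ := h
  simp only [proj, List.filter_append, List.filter_cons]
  by_cases ha : a.2.1 = p <;> by_cases hb : b.2.1 = p
  · exact absurd (ha.trans hb.symm) hab
  all_goals simp [ha, hb]

theorem proj_eq_of_reflTransGen {σ τ : List (Ev Op Proc)}
    (h : Relation.ReflTransGen (SwapStep IndepR) σ τ) (p : Proc) : proj p σ = proj p τ := by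
  induction h with
  | refl => rfl
  | tail _ hs ih => exact ih.trans (proj_eq_of_swapStep hs p)

theorem proj_eq_of_proj_cons_eq {a : Ev Op Proc} {σ τ : List (Ev Op Proc)} {p : Proc}
    (h : proj p (a :: σ) = proj p (a :: τ)) : proj p σ = proj p τ := by
  by_cases ha : a.2.1 = p
  · simpa [proj, List.filter_cons, ha] using h
  · simpa [proj, List.filter_cons, ha] using h

theorem reflTransGen_of_proj_eq :
    ∀ (σ τ : List (Ev Op Proc)), (∀ p, proj p σ = proj p τ) →
      Relation.ReflTransGen (SwapStep IndepR) σ τ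
  | [], [], _ => .refl
  | e :: _, [], hproj => by simpa [proj] using hproj e.2.1
  | σ, a :: τ, hproj => by
    have hfirst : proj a.2.1 σ = a :: proj a.2.1 τ := by
      simpa [proj, List.filter_cons] using hproj a.2.1
    obtain ⟨u, v, rfl, hu, -, -⟩ := List.filter_eq_cons_iff.mp hfirst
    have toFront := SwapStep.reflTransGen_append_cons (I := IndepR) a v u
      fun e he hea => hu e he (by simpa using hea)
    have hrest : ∀ p, proj p (u ++ v) = proj p τ := fun p =>
      proj_eq_of_proj_cons_eq ((proj_eq_of_reflTransGen toFront p).symm.trans (hproj p))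
    exact toFront.trans (SwapStep.reflTransGen_cons a (reflTransGen_of_proj_eq (u ++ v) τ hrest))

end Projection

/-- σ ~_R σ' iff the per-process projections of σ and σ' agree. -/
theorem traceEquivR_iff_proj_eq [DecidableEq Proc]
    (σ σ' : List (Ev Op Proc)) :
    Relation.ReflTransGen (SwapStep (IndepR (Op := Op) (Proc := Proc))) σ σ' ↔
      ∀ p : Proc, proj p σ = proj p σ' :=
  ⟨proj_eq_of_reflTransGen, reflTransGen_of_proj_eq σ σ'⟩
end

section
/- Assume the process type Proc is nonempty. Let u₁, …, u_m (m ≥ 1) be δ-free words over Σ_δ and let σ = u₁ ++ [δ] ++ u₂ ++ [δ] ++ … ++ [δ] ++ u_m. Then for every word σ' over Σ_δ: σ' ≈ σ if and only if σ' = u'₁ ++ [δ] ++ u'₂ ++ [δ] ++ … ++ [δ] ++ u'_m for some δ-free words u'₁, …, u'_m such that π_p(u'_j) = π_p(u_j) for every process p and every 1 ≤ j ≤ m. -/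
variable {Op Proc : Type*}

/-- The alphabet Σ_δ: events together with a fresh quiescence symbol δ. -/
abbrev EvD (Op Proc : Type*) := Ev Op Proc ⊕ Unit

/-- The quiescence symbol δ. -/
def dd : EvD Op Proc := Sum.inr ()

/-- π_p^δ: keep all δ's and the events of process p. -/
def projD [DecidableEq Proc] (p : Proc) (w : List (EvD Op Proc)) : List (EvD Op Proc) :=
  w.filter (fun x => Sum.elim (fun e : Ev Op Proc => decide (e.2.1 = p)) (fun _ => true) x)

/-- The word u₁ ++ [δ] ++ u₂ ++ [δ] ++ … ++ [δ] ++ u_m built from δ-free blocks. -/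
def interδ (L : List (List (Ev Op Proc))) : List (EvD Op Proc) :=
  List.intercalate [dd] (L.map (List.map Sum.inl))

/-!
Cutting a word at its δ's writes it as `interδ` of a nonempty list of δ-free blocks, and this
decomposition is unique because `List.splitOn` inverts `List.intercalate`. Since `π_p^δ` keeps
every δ, it acts blockwise: `projD p (interδ L) = interδ (L.map (proj p))`. So `σ' ≈ interδ L`
says exactly that the block decomposition of `σ'` has, for every `p`, the same `p`-projections
as `L`.
-/

theorem List.forall₂_forall_iff {ι α β : Type*} [Nonempty ι] {R : ι → α → β → Prop} :
    ∀ {l₁ : List α} {l₂ : List β},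
      List.Forall₂ (fun a b => ∀ i, R i a b) l₁ l₂ ↔ ∀ i, List.Forall₂ (R i) l₁ l₂
  | [], [] => by simp
  | a :: l₁, b :: l₂ => by simp [List.forall₂_forall_iff (l₁ := l₁), forall_and]
  | [], _ :: _ | _ :: _, [] => by simp

theorem List.forall₂_map_eq_iff {α β γ : Type*} {f : α → γ} {g : β → γ} {l₁ : List α}
    {l₂ : List β} : List.Forall₂ (fun a b => f a = g b) l₁ l₂ ↔ l₁.map f = l₂.map g := by
  rw [← List.forall₂_eq_eq_eq, List.forall₂_map_left_iff, List.forall₂_map_right_iff]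

lemma interδ_singleton (u : List (Ev Op Proc)) : interδ [u] = u.map Sum.inl := by
  simp [interδ]

lemma interδ_cons_cons (u v : List (Ev Op Proc)) (L : List (List (Ev Op Proc))) :
    interδ (u :: v :: L) = u.map Sum.inl ++ dd :: interδ (v :: L) := by
  simp [interδ, List.intercalate_cons_cons]

lemma dd_cons_interδ (u : List (Ev Op Proc)) (L : List (List (Ev Op Proc))) :
    dd :: interδ (u :: L) = interδ ([] :: u :: L) := by
  simp [interδ_cons_cons]

lemma inl_cons_interδ (e : Ev Op Proc) (u : List (Ev Op Proc))
    (L : List (List (Ev Op Proc))) :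
    Sum.inl e :: interδ (u :: L) = interδ ((e :: u) :: L) := by
  cases L <;> simp [interδ_singleton, interδ_cons_cons]

lemma exists_ne_nil_interδ_eq : ∀ w : List (EvD Op Proc), ∃ L ≠ [], w = interδ L
  | [] => ⟨[[]], by simp, rfl⟩
  | x :: w => by
    obtain ⟨_ | ⟨u, L⟩, hL, rfl⟩ := exists_ne_nil_interδ_eq w
    · exact absurd rfl hL
    rcases x with e | ⟨⟩
    · exact ⟨(e :: u) :: L, by simp, inl_cons_interδ e u L⟩
    · exact ⟨[] :: u :: L, by simp, dd_cons_interδ u L⟩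

lemma interδ_injOn : Set.InjOn (interδ (Op := Op) (Proc := Proc)) {L | L ≠ []} := by
  intro L₁ h₁ L₂ h₂ h
  let _ : DecidableEq (EvD Op Proc) := Classical.decEq _
  have hfree : ∀ L : List (List (Ev Op Proc)), ∀ l ∈ L.map (List.map Sum.inl), dd ∉ l := by
    simp [dd]
  have := congrArg (List.splitOn dd) h
  rw [interδ, interδ, List.splitOn_intercalate _ (hfree L₁) (by simpa using h₁),
    List.splitOn_intercalate _ (hfree L₂) (by simpa using h₂)] at this
  exact (List.map_injective_iff.2 (List.map_injective_iff.2 Sum.inl_injective)) this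

section

variable [DecidableEq Proc]

lemma projD_append (p : Proc) (w w' : List (EvD Op Proc)) :
    projD p (w ++ w') = projD p w ++ projD p w' :=
  List.filter_append ..

lemma projD_dd_cons (p : Proc) (w : List (EvD Op Proc)) :
    projD p (dd :: w) = dd :: projD p w := by
  simp [projD, dd, List.filter_cons]

lemma projD_map_inl (p : Proc) (u : List (Ev Op Proc)) :
    projD p (u.map Sum.inl) = (proj p u).map Sum.inl := by
  simp [projD, proj, List.filter_map, Function.comp_def]

lemma projD_interδ (p : Proc) :
    ∀ L : List (List (Ev Op Proc)), projD p (interδ L) = interδ (L.map (proj p))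
  | [] => rfl
  | [u] => by simp [interδ_singleton, projD_map_inl]
  | u :: v :: L => by
    rw [interδ_cons_cons, projD_append, projD_dd_cons, projD_map_inl, projD_interδ p (v :: L)]
    simp only [List.map_cons, interδ_cons_cons]

end

/-- A word is ≈-equivalent to u₁ ++ [δ] ++ … ++ [δ] ++ u_m iff it has the form
u'₁ ++ [δ] ++ … ++ [δ] ++ u'_m with matching per-process projections blockwise. -/
theorem approx_iff_blockwise [DecidableEq Proc] [Nonempty Proc]
    (L : List (List (Ev Op Proc))) (hm : 1 ≤ L.length) :
    ∀ σ' : List (EvD Op Proc),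
      (∀ p : Proc, projD p σ' = projD p (interδ L)) ↔
        ∃ L' : List (List (Ev Op Proc)),
          List.Forall₂ (fun u' u => ∀ p : Proc, proj p u' = proj p u) L' L ∧
          σ' = interδ L' := by
  intro σ'
  constructor
  · intro h
    obtain ⟨L', hL', rfl⟩ := exists_ne_nil_interδ_eq σ'
    refine ⟨L', List.forall₂_forall_iff.2 fun p => List.forall₂_map_eq_iff.2 ?_, rfl⟩
    have hL : L ≠ [] := List.length_pos_iff.1 hm
    exact interδ_injOn (mt List.map_eq_nil_iff.1 hL') (mt List.map_eq_nil_iff.1 hL)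
      (by simpa only [projD_interδ] using h p)
  · rintro ⟨L', hL', rfl⟩ p
    rw [projD_interδ, projD_interδ, List.forall₂_map_eq_iff.1]
    exact hL'.imp fun _ _ h => h p
end

section
/- Let A be a type with decidable equality and let σ : List A satisfy σ.Nodup. Define the NFA M over alphabet A with state type Finset A, start set {∅}, accept set {σ.toFinset}, and step T e = {T ∪ {e}} if e ∈ σ.toFinset and e ∉ T, and step T e = ∅ otherwise. Then the language accepted by M is exactly the set of permutations of σ: M accepts a word w if and only if w.Perm σ. -/
/-! The state reached after reading `w` is the set of letters read so far, and the run dies as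
soon as a letter outside `σ` or a repeated letter is read. Hence `σ.toFinset` is reached exactly
when `w` is duplicate-free with the same letters as `σ`, which for duplicate-free `σ` means
`w ~ σ`. -/

/-- The NFA with states the finite subsets of the events of σ that accepts
exactly the permutations of σ. -/
def permNFA {A : Type*} [DecidableEq A] (σ : List A) : NFA A (Finset A) where
  step := fun T e => if e ∈ σ.toFinset ∧ e ∉ T then {T ∪ {e}} else ∅
  start := {∅}
  accept := {σ.toFinset}

theorem NFA.evalFrom_empty {α σ : Type*} (M : NFA α σ) (x : List α) : M.evalFrom ∅ x = ∅ := by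
  induction x with
  | nil => rfl
  | cons a x ih => rw [evalFrom_cons, stepSet_empty, ih]

theorem List.nodup_and_toFinset_eq_iff_perm {A : Type*} [DecidableEq A] {l l' : List A}
    (hl' : l'.Nodup) : l.Nodup ∧ l.toFinset = l'.toFinset ↔ l.Perm l' :=
  ⟨fun h => perm_of_nodup_nodup_toFinset_eq h.1 hl' h.2,
    fun h => ⟨h.nodup_iff.2 hl', toFinset_eq_of_perm _ _ h⟩⟩

section permNFA

variable {A : Type*} [DecidableEq A] (σ : List A)

theorem permNFA_step (T : Finset A) (e : A) :
    (permNFA σ).step T e = if e ∈ σ ∧ e ∉ T then {insert e T} else ∅ := by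
  simp [permNFA]

theorem permNFA_evalFrom_singleton (T : Finset A) (w : List A) :
    (permNFA σ).evalFrom {T} w =
      if w.Nodup ∧ ∀ a ∈ w, a ∈ σ ∧ a ∉ T then {T ∪ w.toFinset} else ∅ := by
  induction w generalizing T with
  | nil => simp
  | cons a w ih =>
    rw [NFA.evalFrom_cons, NFA.stepSet_singleton, permNFA_step]
    by_cases ha : a ∈ σ ∧ a ∉ T
    · rw [if_pos ha, ih, Finset.insert_union_comm]
      simp only [List.nodup_cons, List.forall_mem_cons, Finset.mem_insert, not_or,
        List.toFinset_cons]
      grind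
    · rw [if_neg ha, NFA.evalFrom_empty, if_neg]
      simp only [List.nodup_cons, List.forall_mem_cons]
      grind

theorem mem_permNFA_accepts {w : List A} :
    w ∈ (permNFA σ).accepts ↔ σ.toFinset ∈ (permNFA σ).evalFrom {∅} w := by
  rw [NFA.mem_accepts]
  exact exists_eq_left

end permNFA

/-- The NFA `permNFA σ` accepts a word w iff w is a permutation of σ. -/
theorem permNFA_accepts_iff_perm {A : Type*} [DecidableEq A]
    (σ : List A) (hσ : σ.Nodup) :
    ∀ w : List A, w ∈ (permNFA σ).accepts ↔ w.Perm σ := by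
  intro w
  rw [mem_permNFA_accepts, permNFA_evalFrom_singleton, ← List.nodup_and_toFinset_eq_iff_perm hσ]
  split_ifs with h
  · simp [h.1, eq_comm]
  · simp only [Set.mem_empty_iff_false, false_iff]
    rintro ⟨hw, heq⟩
    exact h ⟨hw, fun a ha => ⟨by simpa [heq] using List.mem_toFinset.2 ha, Finset.notMem_empty a⟩⟩
end

section
/- Let L_S be a language over Σ such that every word in L_S is sequential and quiescent, and let L_Q be a language over Σ such that every word in L_Q is legal and quiescent. Then the following are equivalent: (a) for every σ ∈ L_Q and every decomposition σ = σ₁ ++ … ++ σ_k into non-empty, legal, end-to-end quiescent runs, there exist runs τ₁, …, τ_k with τ_i a permutation (List.Perm) of σ_i and τ₁ ++ … ++ τ_k ∈ L_S; (b) for every σ ∈ L_Q and every decomposition σ = σ₁ ++ … ++ σ_k into non-empty, legal, end-to-end quiescent runs, the word [δ] ++ σ₁ ++ [δ] ++ … ++ [δ] ++ σ_k ++ [δ] belongs to 𝓛_U(S_δ). -/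
variable {Op Proc : Type*}

/-- π_Σ: remove all occurrences of δ. -/
def piSigma (w : List (EvD Op Proc)) : List (Ev Op Proc) :=
  w.filterMap Sum.getLeft?

/-- S_δ: the words over Σ_δ whose δ-erasure is in L_S and all of whose prefixes
ending in δ have quiescent δ-erasure. -/
def Sdelta (L_S : Set (List (Ev Op Proc))) : Set (List (EvD Op Proc)) :=
  {w | piSigma w ∈ L_S ∧ ∀ u : List (EvD Op Proc), u ++ [dd] <+: w → Quiescent (piSigma u)}

/-- The universal independence relation on Σ_δ: any two events from Σ commute. -/
def IndepU (x y : EvD Op Proc) : Prop :=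
  ∃ a b : Ev Op Proc, x = Sum.inl a ∧ y = Sum.inl b

/-- 𝓛_U(L): closure of L under swaps of adjacent Σ-letters. -/
def LU (L : Set (List (EvD Op Proc))) : Set (List (EvD Op Proc)) :=
  {w' | ∃ w ∈ L, Relation.ReflTransGen (SwapStep (IndepU (Op := Op) (Proc := Proc))) w w'}

/-- The word [δ] ++ σ₁ ++ [δ] ++ σ₂ ++ [δ] ++ … ++ [δ] ++ σ_k ++ [δ]. -/
def sigmaDelta (L : List (List (Ev Op Proc))) : List (EvD Op Proc) :=
  [dd] ++ List.intercalate [dd] (L.map (List.map Sum.inl)) ++ [dd]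

/-!
A swap of two adjacent events never moves an event across a `δ`, so the words from which
`δ σ₁ δ … δ σ_k δ` is reachable by such swaps are exactly the words `δ τ₁ δ … δ τ_k δ` with each
`τ_i` a permutation of `σ_i`. For such a word, membership in `S_δ` reduces to `τ₁ ⋯ τ_k ∈ L_S`:
a legal quiescent run has even length (in each projection the last invocation must be answered),
so every `δ` follows an even-length prefix of the sequential run `τ₁ ⋯ τ_k`, and an even-length
prefix of a sequential run is quiescent.
-/

lemma List.Forall₂.modifyHead {α β : Type*} {R : α → β → Prop} {f : α → α} {g : β → β}
    (hfg : ∀ a b, R a b → R (f a) (g b)) {l : List α} {l' : List β} (h : List.Forall₂ R l l') :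
    List.Forall₂ R (l.modifyHead f) (l'.modifyHead g) := by
  cases h <;> simp [*]

lemma forall₂_perm_trans {α : Type*} {S₁ S₂ S₃ : List (List α)}
    (h₁₂ : List.Forall₂ List.Perm S₁ S₂) (h₂₃ : List.Forall₂ List.Perm S₂ S₃) :
    List.Forall₂ List.Perm S₁ S₃ := by
  induction h₁₂ generalizing S₃ with
  | nil => exact h₂₃
  | cons h hS ih =>
    obtain _ | ⟨h', hS'⟩ := h₂₃
    exact .cons (h.trans h') (ih hS')

lemma even_length_flatten {α : Type*} {S : List (List α)} (h : ∀ s ∈ S, Even s.length) :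
    Even S.flatten.length := by
  induction S with
  | nil => simp
  | cons s S ih => simp_all [Even.add]

lemma even_length_of_forall₂_perm {α : Type*} {T L : List (List α)}
    (h : List.Forall₂ List.Perm T L) (hL : ∀ s ∈ L, Even s.length) : ∀ t ∈ T, Even t.length := by
  induction h with
  | nil => simp
  | cons hst _ ih =>
    simp only [List.forall_mem_cons] at hL ⊢
    exact ⟨hst.length_eq ▸ hL.1, ih hL.2⟩

section Swaps

variable {A : Type*} {I : A → A → Prop}

lemma SwapStep.append_left {w w' : List A} (h : SwapStep I w w') (x : List A) :
    SwapStep I (x ++ w) (x ++ w') := by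
  obtain ⟨u, v, a, b, hab⟩ := h
  simpa using SwapStep.swap (x ++ u) v a b hab

lemma SwapStep.append_right {w w' : List A} (h : SwapStep I w w') (y : List A) :
    SwapStep I (w ++ y) (w' ++ y) := by
  obtain ⟨u, v, a, b, hab⟩ := h
  simpa using SwapStep.swap u (v ++ y) a b hab

lemma reflTransGen_swapStep_append {w₁ w₁' w₂ w₂' : List A}
    (h₁ : Relation.ReflTransGen (SwapStep I) w₁ w₁')
    (h₂ : Relation.ReflTransGen (SwapStep I) w₂ w₂') :
    Relation.ReflTransGen (SwapStep I) (w₁ ++ w₂) (w₁' ++ w₂') :=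
  (Relation.ReflTransGen.lift (· ++ w₂) (fun _ _ h => h.append_right w₂) _ _ h₁).trans
    (Relation.ReflTransGen.lift (w₁' ++ ·) (fun _ _ h => h.append_left w₁') _ _ h₂)

lemma reflTransGen_swapStep_intercalate (sep : List A) {S S' : List (List A)}
    (h : List.Forall₂ (Relation.ReflTransGen (SwapStep I)) S S') :
    Relation.ReflTransGen (SwapStep I) (sep.intercalate S) (sep.intercalate S') := by
  induction h with
  | nil => rfl
  | cons hst hSS ih =>
    rcases hSS with _ | ⟨-, -⟩
    · simpa using hst
    · simp only [List.intercalate_cons_cons]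
      exact reflTransGen_swapStep_append (reflTransGen_swapStep_append hst .refl) ih

end Swaps

lemma quiescent_of_prefix_of_sequentialRun {w v : List (Ev Op Proc)} (hw : SequentialRun w)
    (hv : v <+: w) (heven : Even v.length) : Quiescent v := by
  rintro σ₁ e σ₂ rfl he
  obtain ⟨t, rfl⟩ := hv
  rcases hw with hw | ⟨-, hpairs, -⟩
  · simp at hw
  -- `e` sits at an even position, where the next event answers it, or at an odd one, where
  -- it would be the response to the previous event
  rcases Nat.even_or_odd σ₁.length with hσ₁ | hσ₁
  · obtain ⟨e', σ₂, rfl⟩ : ∃ e' σ₂', σ₂ = e' :: σ₂' := by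
      refine List.exists_cons_of_ne_nil ?_
      rintro rfl
      simp [Nat.even_add_one, hσ₁] at heven
    have := hpairs σ₁.length (Nat.even_iff.mp hσ₁) (by simp)
    simp only [List.append_assoc, List.cons_append, List.getElem_append_right (le_refl _)] at this
    exact ⟨e', by simp, by simpa using this⟩
  · obtain ⟨σ₀, x, rfl⟩ := List.eq_nil_or_concat σ₁ |>.resolve_left (by rintro rfl; simp at hσ₁)
    have := hpairs σ₀.length (by simpa [Nat.odd_add_one, Nat.even_iff] using hσ₁) (by simp)
    simp [List.getElem_append_right, EvMatches, show e.2.2 = true from he] at this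

lemma even_length_proj_of_quiescent [DecidableEq Proc] {σ : List (Ev Op Proc)} {p : Proc}
    (hseq : SequentialRun (proj p σ)) (hq : Quiescent σ) : Even (proj p σ).length := by
  by_contra hodd
  rcases hseq with hnil | ⟨-, -, hlast⟩
  · simp [hnil] at hodd
  obtain ⟨m, e, hproj, hinv⟩ : ∃ m e, proj p σ = m ++ [e] ∧ IsInv e := by
    obtain ⟨hlt, hinv⟩ := hlast (by rw [Nat.not_even_iff_odd] at hodd; grind)
    refine ⟨_, _, (List.dropLast_append_getLast (List.ne_nil_of_length_pos (by omega))).symm, ?_⟩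
    rwa [List.getLast_eq_getElem]
  obtain ⟨σ₀, τ, rfl, -, hτ⟩ := List.filter_eq_append_iff.mp hproj
  obtain ⟨τ₁, τ₂, rfl, -, he, hτ₂⟩ := List.filter_eq_cons_iff.mp hτ
  -- the last invocation of `p` has no matching response after it
  obtain ⟨e', he', hmatch⟩ := hq (σ₀ ++ τ₁) e τ₂ (by simp) hinv
  have : e' ∈ τ₂.filter (fun x => x.2.1 = p) := by
    simpa [he', ← hmatch.2.1] using he
  simp [hτ₂] at this

lemma even_length_of_legal_of_quiescent [DecidableEq Proc] {σ : List (Ev Op Proc)}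
    (hleg : Legal σ) (hq : Quiescent σ) : Even σ.length := by
  rw [← List.length_map (f := fun e : Ev Op Proc => e.2.1),
    ← List.sum_toFinset_count_eq_length]
  refine Finset.even_sum _ fun p _ => ?_
  have := even_length_proj_of_quiescent (hleg p) hq
  rwa [List.count, List.countP_map, List.countP_eq_length_filter]

def segments : List (EvD Op Proc) → List (List (Ev Op Proc))
  | [] => [[]]
  | Sum.inl a :: w => (segments w).modifyHead (a :: ·)
  | Sum.inr _ :: w => [] :: segments w

@[simp] lemma segments_nil : segments ([] : List (EvD Op Proc)) = [[]] := rfl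

@[simp] lemma segments_cons_inl (a : Ev Op Proc) (w : List (EvD Op Proc)) :
    segments (Sum.inl a :: w) = (segments w).modifyHead (a :: ·) := rfl

@[simp] lemma segments_cons_inr (u : Unit) (w : List (EvD Op Proc)) :
    segments (Sum.inr u :: w) = [] :: segments w := rfl

lemma segments_ne_nil (w : List (EvD Op Proc)) : segments w ≠ [] := by
  induction w with
  | nil => simp
  | cons x w ih => rcases x with a | u <;> simp [ih]

lemma segments_append_dd (u v : List (EvD Op Proc)) :
    segments (u ++ dd :: v) = segments u ++ segments v := by
  induction u with
  | nil => rfl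
  | cons x u ih =>
    rcases x with a | _
    · obtain ⟨s, S, hS⟩ := List.exists_cons_of_ne_nil (segments_ne_nil u)
      simp [ih, hS]
    · simp [ih]

@[simp] lemma segments_map_inl (s : List (Ev Op Proc)) : segments (s.map Sum.inl) = [s] := by
  induction s with
  | nil => rfl
  | cons a s ih => simp [ih]

lemma segments_intercalate {S : List (List (Ev Op Proc))} (hS : S ≠ []) :
    segments ([dd].intercalate (S.map (List.map Sum.inl))) = S := by
  induction S with
  | nil => contradiction
  | cons s S ih =>
    rcases S with _ | ⟨s', S⟩
    · simp
    · simpa [List.intercalate_cons_cons, segments_append_dd] using ih (List.cons_ne_nil _ _)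

lemma intercalate_segments (w : List (EvD Op Proc)) :
    [dd].intercalate ((segments w).map (List.map Sum.inl)) = w := by
  induction w with
  | nil => rfl
  | cons x w ih =>
    obtain ⟨s, S, hS⟩ := List.exists_cons_of_ne_nil (segments_ne_nil w)
    rcases x with a | ⟨⟩
    · simpa [hS] using ih
    · rw [segments_cons_inr, List.map_cons, List.intercalate_cons_of_ne_nil (by simp [hS]), ih]
      rfl

lemma segments_injective : Function.Injective (segments (Op := Op) (Proc := Proc)) :=
  Function.LeftInverse.injective
    (g := fun S => [dd].intercalate (S.map (List.map Sum.inl))) fun w => intercalate_segments w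

lemma flatten_segments (w : List (EvD Op Proc)) : (segments w).flatten = piSigma w := by
  induction w with
  | nil => rfl
  | cons x w ih =>
    obtain ⟨s, S, hS⟩ := List.exists_cons_of_ne_nil (segments_ne_nil w)
    rcases x with a | u <;> simp_all [piSigma, List.filterMap_cons]

lemma segments_sigmaDelta {T : List (List (Ev Op Proc))} (hT : T ≠ []) :
    segments (sigmaDelta T) = [] :: (T ++ [[]]) := by
  rw [sigmaDelta, List.append_assoc, List.singleton_append, ← List.nil_append (dd :: _),
    segments_append_dd, segments_append_dd, segments_intercalate hT]
  rfl

lemma reflTransGen_swapStep_map_inl_of_perm {s t : List (Ev Op Proc)} (h : s.Perm t) :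
    Relation.ReflTransGen (SwapStep IndepU) (s.map Sum.inl) (t.map Sum.inl) := by
  induction h with
  | nil => rfl
  | cons x _ ih => simpa using reflTransGen_swapStep_append (.refl (a := [Sum.inl x])) ih
  | swap x y l => exact .single (by simpa using SwapStep.swap [] _ _ _ ⟨y, x, rfl, rfl⟩)
  | trans _ _ ih₁ ih₂ => exact ih₁.trans ih₂

lemma reflTransGen_swapStep_sigmaDelta {T L : List (List (Ev Op Proc))}
    (h : List.Forall₂ List.Perm T L) :
    Relation.ReflTransGen (SwapStep IndepU) (sigmaDelta T) (sigmaDelta L) := by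
  refine reflTransGen_swapStep_append (reflTransGen_swapStep_append .refl
    (reflTransGen_swapStep_intercalate _ ?_)) .refl
  rw [List.forall₂_map_left_iff, List.forall₂_map_right_iff]
  exact h.imp fun _ _ => reflTransGen_swapStep_map_inl_of_perm

lemma forall₂_perm_segments_of_swapStep {w w' : List (EvD Op Proc)}
    (h : SwapStep IndepU w w') : List.Forall₂ List.Perm (segments w) (segments w') := by
  obtain ⟨u, v, _, _, ⟨a, b, rfl, rfl⟩⟩ := h
  induction u with
  | nil =>
    obtain ⟨s, S, hS⟩ := List.exists_cons_of_ne_nil (segments_ne_nil v)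
    have hS_refl : S.Forall₂ List.Perm S := List.forall₂_same.2 fun t _ => .refl t
    simpa [hS] using List.Forall₂.cons (List.Perm.swap b a s) hS_refl
  | cons x u ih =>
    rcases x with c | _
    · exact ih.modifyHead fun _ _ => .cons c
    · exact .cons (.refl _) ih

lemma forall₂_perm_segments_of_reflTransGen {w w' : List (EvD Op Proc)}
    (h : Relation.ReflTransGen (SwapStep IndepU) w w') :
    List.Forall₂ List.Perm (segments w) (segments w') := by
  induction h with
  | refl => exact List.forall₂_same.2 fun _ _ => .refl _
  | tail _ h ih => exact forall₂_perm_trans ih (forall₂_perm_segments_of_swapStep h)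

lemma segments_sigmaDelta_nil :
    segments (sigmaDelta ([] : List (List (Ev Op Proc)))) = [[], [], []] :=
  rfl

lemma exists_eq_segments_sigmaDelta {S L : List (List (Ev Op Proc))}
    (h : List.Forall₂ List.Perm S (segments (sigmaDelta L))) :
    ∃ T, List.Forall₂ List.Perm T L ∧ S = segments (sigmaDelta T) := by
  rcases eq_or_ne L [] with rfl | hL
  · refine ⟨[], .nil, ?_⟩
    simpa [segments_sigmaDelta_nil, List.forall₂_cons_right_iff] using h
  rw [segments_sigmaDelta hL] at h
  obtain ⟨_, S, hnil, hS, rfl⟩ := List.forall₂_cons_right_iff.mp h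
  obtain ⟨T, last, rfl, hT, hlast⟩ :
      ∃ T last, S = T ++ last ∧ List.Forall₂ List.Perm T L ∧ List.Forall₂ List.Perm last [[]] :=
    ⟨_, _, (List.take_append_drop L.length S).symm, List.forall₂_take_append _ _ _ hS,
      List.forall₂_drop_append _ _ _ hS⟩
  refine ⟨T, hT, ?_⟩
  rw [segments_sigmaDelta (by rintro rfl; exact hL (List.forall₂_nil_left_iff.mp hT))]
  simp_all [List.forall₂_cons_right_iff]

lemma mem_LU_sigmaDelta_iff {S : Set (List (EvD Op Proc))} {L : List (List (Ev Op Proc))} :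
    sigmaDelta L ∈ LU S ↔ ∃ T, List.Forall₂ List.Perm T L ∧ sigmaDelta T ∈ S := by
  constructor
  · rintro ⟨w, hw, hwL⟩
    obtain ⟨T, hTL, hT⟩ :=
      exists_eq_segments_sigmaDelta (forall₂_perm_segments_of_reflTransGen hwL)
    exact ⟨T, hTL, segments_injective hT ▸ hw⟩
  · rintro ⟨T, hTL, hT⟩
    exact ⟨_, hT, reflTransGen_swapStep_sigmaDelta hTL⟩

lemma piSigma_sigmaDelta (T : List (List (Ev Op Proc))) : piSigma (sigmaDelta T) = T.flatten := by
  rcases eq_or_ne T [] with rfl | hT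
  · rfl
  · simp [← flatten_segments, segments_sigmaDelta hT]

lemma mem_segments_sigmaDelta {T : List (List (Ev Op Proc))} {s : List (Ev Op Proc)}
    (hs : s ∈ segments (sigmaDelta T)) : s = [] ∨ s ∈ T := by
  rcases eq_or_ne T [] with rfl | hT
  · simp_all [segments_sigmaDelta_nil]
  · simp_all [segments_sigmaDelta hT, or_comm]

lemma quiescent_piSigma_of_prefix {w u : List (EvD Op Proc)} (hw : SequentialRun (piSigma w))
    (heven : ∀ s ∈ segments w, Even s.length) (hu : u ++ [dd] <+: w) : Quiescent (piSigma u) := by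
  obtain ⟨v, rfl⟩ := hu
  have hseg : segments (u ++ [dd] ++ v) = segments u ++ segments v := by
    simpa using segments_append_dd u v
  refine quiescent_of_prefix_of_sequentialRun hw
    ⟨piSigma v, by simp [piSigma, dd, List.filterMap_cons]⟩ ?_
  rw [← flatten_segments]
  exact even_length_flatten fun s hs => heven s (hseg ▸ List.mem_append_left _ hs)

lemma sigmaDelta_mem_Sdelta_iff {L_S : Set (List (Ev Op Proc))}
    (hLS : ∀ w ∈ L_S, SequentialRun w) {T : List (List (Ev Op Proc))}
    (hT : ∀ t ∈ T, Even t.length) : sigmaDelta T ∈ Sdelta L_S ↔ T.flatten ∈ L_S := by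
  rw [Sdelta, Set.mem_ofPred_eq, piSigma_sigmaDelta]
  refine ⟨And.left, fun h => ⟨h, fun u hu => quiescent_piSigma_of_prefix ?_ ?_ hu⟩⟩
  · rw [piSigma_sigmaDelta]
    exact hLS _ h
  · intro s hs
    rcases mem_segments_sigmaDelta hs with rfl | hs
    exacts [⟨0, rfl⟩, hT s hs]

theorem qc_correctness_iff_general [DecidableEq Proc]
    (L_S : Set (List (Ev Op Proc)))
    (hLS : ∀ w ∈ L_S, SequentialRun w ∧ Quiescent w)
    (L_Q : Set (List (Ev Op Proc))) :
    (∀ σ ∈ L_Q, ∀ L : List (List (Ev Op Proc)), σ = L.flatten →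
        (∀ u ∈ L, u ≠ [] ∧ Legal u ∧ ETEQ u) →
        ∃ T : List (List (Ev Op Proc)),
          List.Forall₂ (fun t s => t.Perm s) T L ∧ T.flatten ∈ L_S) ↔
      (∀ σ ∈ L_Q, ∀ L : List (List (Ev Op Proc)), σ = L.flatten →
        (∀ u ∈ L, u ≠ [] ∧ Legal u ∧ ETEQ u) →
        sigmaDelta L ∈ LU (Sdelta L_S)) := by
  refine forall₂_congr fun _ _ => forall_congr' fun L => forall_congr' fun _ =>
    forall_congr' fun hL => ?_
  have hLeven : ∀ s ∈ L, Even s.length := fun s hs =>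
    even_length_of_legal_of_quiescent (hL s hs).2.1 (hL s hs).2.2.1
  rw [mem_LU_sigmaDelta_iff]
  exact exists_congr fun T => and_congr_right fun hTL => (sigmaDelta_mem_Sdelta_iff
    (fun w hw => (hLS w hw).1) (even_length_of_forall₂_perm hTL hLeven)).symm

/-- Correctness: every run of L_Q is allowed by L_S under quiescent consistency iff
every σ^δ arising from a run of L_Q belongs to 𝓛_U(S_δ). -/
theorem qc_correctness_iff [DecidableEq Proc]
    (L_S : Set (List (Ev Op Proc)))
    (hLS : ∀ w ∈ L_S, SequentialRun w ∧ Quiescent w)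
    (L_Q : Set (List (Ev Op Proc)))
    (hLQ : ∀ σ ∈ L_Q, Legal σ ∧ Quiescent σ) :
    (∀ σ ∈ L_Q, ∀ L : List (List (Ev Op Proc)), σ = L.flatten →
        (∀ u ∈ L, u ≠ [] ∧ Legal u ∧ ETEQ u) →
        ∃ T : List (List (Ev Op Proc)),
          List.Forall₂ (fun t s => t.Perm s) T L ∧ T.flatten ∈ L_S) ↔
      (∀ σ ∈ L_Q, ∀ L : List (List (Ev Op Proc)), σ = L.flatten →
        (∀ u ∈ L, u ≠ [] ∧ Legal u ∧ ETEQ u) →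
        sigmaDelta L ∈ LU (Sdelta L_S)) :=
  qc_correctness_iff_general L_S hLS L_Q
end
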